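/- arXiv:1711.06386 — 2 statements merged into one kernel-verified Lean document; each statement's English description precedes it below -/
import Mathlib

section
/- Let w : ℕ → ℝ be uniformly bounded by w_u, with change frequency (over indices up to k_max) at most c_f, and let w̄[k] = β₀w[k] + β₁w[k-1] + β₂w[k-2] where β₀ = t_s(2+ε₀)/(C_z D_0), β₁ = 2t_s ε₀/(C_z D_0), β₂ = t_s(−2+ε₀)/(C_z D_0), with t_s, C_z, D_0, ε₀ > 0. Then w̄ is (ε̄, 2c_f)-sparse with ε̄ = 4 t_s w_u ε₀ /(C_z D_0): at most a 2c_f fraction of entries of w̄ lie outside [−ε̄, ε̄]. -/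
theorem stmt_2 (k_max : ℕ) (w : ℕ → ℝ) (w_u c_f t_s C_z D_0 ε₀ : ℝ)
    (ht : 0 < t_s) (hC : 0 < C_z) (hD : 0 < D_0) (hε : 0 < ε₀)
    (hb : ∀ k, |w k| ≤ w_u)
    (hcf : ((@Finset.filter ℕ (fun k => 1 ≤ k ∧ w k ≠ w (k - 1))
        (Classical.decPred _) (Finset.range (k_max + 1))).card : ℝ) ≤ c_f * (k_max : ℝ))
    (wbar : ℕ → ℝ)
    (hwbar : ∀ k, wbar k =
      (t_s * (2 + ε₀) / (C_z * D_0)) * w k +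
      (2 * t_s * ε₀ / (C_z * D_0)) * w (k - 1) +
      (t_s * (-2 + ε₀) / (C_z * D_0)) * w (k - 2)) :
    ((@Finset.filter ℕ
        (fun k => 2 ≤ k ∧ ¬ |wbar k| ≤ 4 * t_s * w_u * ε₀ / (C_z * D_0))
        (Classical.decPred _) (Finset.range (k_max + 1))).card : ℝ) ≤
      2 * c_f * (k_max : ℝ) := by
  classical
  have hwu : 0 ≤ w_u := le_trans (abs_nonneg _) (hb 0)
  set S : Finset ℕ := @Finset.filter ℕ (fun k => 1 ≤ k ∧ w k ≠ w (k - 1))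
      (Classical.decPred _) (Finset.range (k_max + 1)) with hS
  set B : Finset ℕ := @Finset.filter ℕ
      (fun k => 2 ≤ k ∧ ¬ |wbar k| ≤ 4 * t_s * w_u * ε₀ / (C_z * D_0))
      (Classical.decPred _) (Finset.range (k_max + 1)) with hB
  have hsub : B ⊆ S ∪ S.image (· + 1) := by
    intro k hk
    simp only [hB, Finset.mem_filter, Finset.mem_range] at hk
    obtain ⟨hkr, hk2, hkbig⟩ := hk
    by_cases h1 : w k = w (k - 1)
    · have h2 : w (k - 1) ≠ w (k - 2) := by
        intro h2
        apply hkbig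
        have hval : wbar k = (4 * t_s * ε₀ / (C_z * D_0)) * w k := by
          rw [hwbar k, ← h1, ← h1] at *
          rw [← h2, ← h1]
          ring
        have hcpos : 0 < 4 * t_s * ε₀ / (C_z * D_0) := by positivity
        calc |wbar k| = (4 * t_s * ε₀ / (C_z * D_0)) * |w k| := by
              rw [hval, abs_mul, abs_of_pos hcpos]
          _ ≤ (4 * t_s * ε₀ / (C_z * D_0)) * w_u := by
              exact mul_le_mul_of_nonneg_left (hb k) hcpos.le
          _ = 4 * t_s * w_u * ε₀ / (C_z * D_0) := by ring
      refine Finset.mem_union_right _ (Finset.mem_image.2 ⟨k - 1, ?_, by omega⟩)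
      simp only [hS, Finset.mem_filter, Finset.mem_range]
      refine ⟨by omega, by omega, ?_⟩
      have : k - 1 - 1 = k - 2 := by omega
      rw [this]; exact h2
    · refine Finset.mem_union_left _ ?_
      simp only [hS, Finset.mem_filter, Finset.mem_range]
      exact ⟨hkr, by omega, h1⟩
  have hcard : (B.card : ℝ) ≤ 2 * (S.card : ℝ) := by
    have h1 : B.card ≤ S.card + (S.image (· + 1)).card :=
      le_trans (Finset.card_le_card hsub) (Finset.card_union_le _ _)
    have h2 : (S.image (· + 1)).card ≤ S.card := Finset.card_image_le
    have : B.card ≤ 2 * S.card := by omega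
    exact_mod_cast this
  calc (B.card : ℝ) ≤ 2 * (S.card : ℝ) := hcard
    _ ≤ 2 * (c_f * k_max) := by linarith [hcf]
    _ = 2 * c_f * k_max := by ring
end

section
/- Let R_z, R_w, C_z, C_w > 0 and d₁ = 1/(C_zR_z) + (1/C_w)(1/R_z + 1/R_w), d₂ = 1/(C_zC_wR_zR_w). If 0 < t_s < (2/3)·min(R_zC_z, R_zC_w, R_wC_w), then d₂t_s² − 2d₁t_s + 4 > 0. -/
theorem stmt_9 (R_z R_w C_z C_w t_s : ℝ)
    (hRz : 0 < R_z) (hRw : 0 < R_w) (hCz : 0 < C_z) (hCw : 0 < C_w)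
    (d₁ d₂ : ℝ)
    (hd₁ : d₁ = 1 / (C_z * R_z) + (1 / C_w) * (1 / R_z + 1 / R_w))
    (hd₂ : d₂ = 1 / (C_z * C_w * R_z * R_w))
    (ht : 0 < t_s)
    (hts : t_s < (2 / 3) * min (R_z * C_z) (min (R_z * C_w) (R_w * C_w))) :
    0 < d₂ * t_s ^ 2 - 2 * d₁ * t_s + 4 := by
  have m1 : min (R_z * C_z) (min (R_z * C_w) (R_w * C_w)) ≤ R_z * C_z :=
    min_le_left _ _
  have m2 : min (R_z * C_z) (min (R_z * C_w) (R_w * C_w)) ≤ R_z * C_w :=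
    le_trans (min_le_right _ _) (min_le_left _ _)
  have m3 : min (R_z * C_z) (min (R_z * C_w) (R_w * C_w)) ≤ R_w * C_w :=
    le_trans (min_le_right _ _) (min_le_right _ _)
  have h1 : t_s < (2/3) * (R_z * C_z) := lt_of_lt_of_le hts (by nlinarith)
  have h2 : t_s < (2/3) * (R_z * C_w) := lt_of_lt_of_le hts (by nlinarith)
  have h3 : t_s < (2/3) * (R_w * C_w) := lt_of_lt_of_le hts (by nlinarith)
  have p1 : (0:ℝ) < C_z * R_z := by positivity
  have p2 : (0:ℝ) < R_z * C_w := by positivity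
  have p3 : (0:ℝ) < R_w * C_w := by positivity
  have e1 : t_s / (C_z * R_z) < 2/3 := (div_lt_iff₀ p1).mpr (by nlinarith)
  have e2 : t_s / (R_z * C_w) < 2/3 := (div_lt_iff₀ p2).mpr (by nlinarith)
  have e3 : t_s / (R_w * C_w) < 2/3 := (div_lt_iff₀ p3).mpr (by nlinarith)
  have hdd : d₁ * t_s = t_s / (C_z * R_z) + t_s / (R_z * C_w) + t_s / (R_w * C_w) := by
    rw [hd₁]; field_simp; ring
  have hpos : 0 < d₂ * t_s ^ 2 := by
    rw [hd₂]; positivity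
  nlinarith [hpos]
end
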